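/- arXiv:1708.09253 — 3 statements merged into one kernel-verified Lean document; each statement's English description precedes it below -/
import Mathlib

section
/- Let A = (Q,T) be a d-dimensional VASS satisfying condition (C), i.e., there exists n ∈ Normals(A) with all components positive. Then there exists a good normal for A: a vector n ∈ Normals(A) with all components positive such that for every v ∈ cone(Inc(A)), −v ∈ cone(Inc(A)) if and only if v · n = 0. -/
open scoped BigOperators ENNReal

/-- A `d`-dimensional VASS: a set of states `Q` together with transitions
labelled by vectors in `{-1,0,1}^d`. -/
structure VASS (d : ℕ) (Q : Type) where
  T : Set (Q × (Fin d → ℤ) × Q)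
  upd_mem : ∀ t ∈ T, ∀ i, t.2.1 i = -1 ∨ t.2.1 i = 0 ∨ t.2.1 i = 1

namespace VASS

variable {d : ℕ} {Q : Type}

/-- Scalar product of an integer vector with a real vector. -/
def dotZ (v : Fin d → ℤ) (w : Fin d → ℝ) : ℝ := ∑ i, (v i : ℝ) * w i

/-- Scalar product of two real vectors. -/
def dotR (v w : Fin d → ℝ) : ℝ := ∑ i, v i * w i

/-- `A.IsPath n p u` : `p 0, u 0, p 1, u 1, …, u (n-1), p n` is a finite path
of length `n ≥ 1` in `A`. -/
def IsPath (A : VASS d Q) (n : ℕ) (p : ℕ → Q) (u : ℕ → Fin d → ℤ) : Prop :=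
  1 ≤ n ∧ ∀ i < n, (p i, u i, p (i + 1)) ∈ A.T

/-- Effect of a path of length `n` with update vectors `u`. -/
def eff (n : ℕ) (u : ℕ → Fin d → ℤ) : Fin d → ℤ :=
  fun i => ∑ j ∈ Finset.range n, u j i

/-- A short cycle: a cycle of length at most `|Q|`. -/
def IsShortCycle (A : VASS d Q) (n : ℕ) (p : ℕ → Q) (u : ℕ → Fin d → ℤ) : Prop :=
  A.IsPath n p u ∧ p n = p 0 ∧ n ≤ Nat.card Q

/-- `Inc A` : the set of effects of short cycles of `A`. -/
def Inc (A : VASS d Q) : Set (Fin d → ℤ) :=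
  { v | ∃ n p u, A.IsShortCycle n p u ∧ v = eff n u }

/-- A zero-avoiding computation of length `n` : all configurations have all
counters positive and consecutive configurations are related by transitions. -/
def IsZeroAvoiding (A : VASS d Q) (n : ℕ) (q : ℕ → Q) (z : ℕ → Fin d → ℕ) : Prop :=
  (∀ i ≤ n, ∀ j, 0 < z i j) ∧
  ∀ i < n, (q i, fun j => (z (i + 1) j : ℤ) - (z i j : ℤ), q (i + 1)) ∈ A.T

/-- `L(pv)` : the least bound on the length of zero-avoiding computations
initiated in the configuration `p v`. -/
noncomputable def Lval (A : VASS d Q) (p : Q) (v : Fin d → ℕ) : ℕ∞ :=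
  ⨆ (n : ℕ) (_ : ∃ q z, q 0 = p ∧ z 0 = v ∧ A.IsZeroAvoiding n q z), (n : ℕ∞)

/-- Termination complexity `𝓛(n)` : the max of `L(pv)` over configurations of size `n`. -/
noncomputable def L (A : VASS d Q) (n : ℕ) : ℕ∞ :=
  ⨆ (p : Q) (v : Fin d → ℕ) (_ : Finset.univ.sup v = n), A.Lval p v

/-- The set of normals of `A`: nonzero vectors `nv` with `v · nv ≤ 0` for all `v ∈ Inc A`. -/
def Normals (A : VASS d Q) : Set (Fin d → ℝ) :=
  { nv | nv ≠ 0 ∧ ∀ v ∈ A.Inc, dotZ v nv ≤ 0 }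

/-- The cone (over ℝ) generated by a set of integer vectors. -/
def coneZ (V : Set (Fin d → ℤ)) : Set (Fin d → ℝ) :=
  { x | ∃ (k : ℕ) (a : Fin k → ℝ) (v : Fin k → Fin d → ℤ),
      (∀ j, 0 ≤ a j) ∧ (∀ j, v j ∈ V) ∧ x = ∑ j, a j • (fun i => ((v j i : ℝ))) }

/-- A good normal: a positive normal such that for every `v ∈ cone(Inc A)`,
`-v ∈ cone(Inc A)` iff `v · n = 0`. -/
def IsGoodNormal (A : VASS d Q) (nv : Fin d → ℝ) : Prop :=
  nv ∈ A.Normals ∧ (∀ i, 0 < nv i) ∧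
  ∀ x ∈ coneZ A.Inc, (-x ∈ coneZ A.Inc ↔ dotR x nv = 0)

/-- `A.Reaches p q` : there is a finite path from `p` to `q`. -/
def Reaches (A : VASS d Q) (p q : Q) : Prop :=
  ∃ n pp u, A.IsPath n pp u ∧ pp 0 = p ∧ pp n = q

/-- A strongly connected component: a maximal set of states pairwise connected
by finite paths. -/
def IsSCC (A : VASS d Q) (R : Set Q) : Prop :=
  (∀ p ∈ R, ∀ q ∈ R, p ≠ q → A.Reaches p q) ∧
  ∀ S : Set Q, R ⊆ S → (∀ p ∈ S, ∀ q ∈ S, p ≠ q → A.Reaches p q) → S = R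

/-- The VASS `A` restricted to the states of `R` and transitions within `R`. -/
def restrict (A : VASS d Q) (R : Set Q) : VASS d R where
  T := { t | ((t.1 : Q), t.2.1, (t.2.2 : Q)) ∈ A.T }
  upd_mem := fun _ ht i => A.upd_mem _ ht i

/-- The VASS `A^nv = (Q, T_nv)` where `T_nv` consists of the transitions of `A`
contained in some short cycle `γ` with `eff(γ) · nv = 0`. -/
def neutral (A : VASS d Q) (nv : Fin d → ℝ) : VASS d Q where
  T := { t ∈ A.T | ∃ n p u, A.IsShortCycle n p u ∧ dotZ (eff n u) nv = 0 ∧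
          ∃ i < n, (p i, u i, p (i + 1)) = t }
  upd_mem := fun t ht i => A.upd_mem t ht.1 i

end VASS

/-! Short cycles have effects bounded by `|Q|`, so `Inc A` is finite and `cone(Inc A)` is a
finitely generated cone `C`; by conic Carathéodory it is a finite union of images of closed
orthants under injective linear maps, hence closed. For each generator `v` with `-v ∉ C`, Farkas'
lemma gives a functional that is nonnegative on `C` and positive at `v`; their sum `f` is
nonnegative on `C` and vanishes at `x ∈ C` only if `-x ∈ C`. Writing `f = (w ⬝ᵥ ·)`, the vector
`n₀ - ε w` is still positive for small `ε > 0`, and `x ↦ -(x ⬝ᵥ (n₀ - ε w))` inherits both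
properties of `f`, since `-(· ⬝ᵥ n₀)` is nonnegative on `C`. -/

open Finset PointedCone

section ConicalCaratheodory

variable {ι 𝕜 M : Type*} [Fintype ι] [Field 𝕜] [LinearOrder 𝕜] [IsStrictOrderedRing 𝕜]
  [AddCommGroup M] [Module 𝕜 M]

theorem exists_nonneg_coeff_eq_zero_of_not_linearIndependent {v : ι → M}
    (hv : ¬LinearIndependent 𝕜 v) {c : ι → 𝕜} (hc : 0 ≤ c) :
    ∃ c' : ι → 𝕜, 0 ≤ c' ∧ (∃ i, c' i = 0) ∧ ∑ i, c' i • v i = ∑ i, c i • v i := by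
  obtain ⟨g₀, hg₀, i₀, hi₀⟩ := Fintype.not_linearIndependent_iff.1 hv
  obtain ⟨g, hg, hpos⟩ : ∃ g : ι → 𝕜, ∑ i, g i • v i = 0 ∧ ({i | 0 < g i} : Finset ι).Nonempty := by
    rcases hi₀.lt_or_gt with h | h
    · exact ⟨-g₀, by simp [hg₀], i₀, by simpa using h⟩
    · exact ⟨g₀, hg₀, i₀, by simpa using h⟩
  -- Subtract from `c` the largest multiple of the relation `g` keeping it nonnegative: the
  -- coordinate `j` of minimal ratio `c j / g j` drops to zero.
  obtain ⟨j, hj, hmin⟩ := exists_min_image _ (fun i => c i / g i) hpos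
  simp only [mem_filter, mem_univ, true_and] at hj hmin
  refine ⟨c - (c j / g j) • g, fun i => ?_, ⟨j, by simp [hj.ne']⟩, ?_⟩
  · rcases le_or_gt (g i) 0 with h | h
    · have := mul_nonpos_of_nonneg_of_nonpos (div_nonneg (hc j) hj.le) h
      simp only [Pi.zero_apply, Pi.sub_apply, Pi.smul_apply, smul_eq_mul, sub_nonneg]
      linarith [show 0 ≤ c i from hc i]
    · simpa using (le_div_iff₀ h).1 (hmin i h)
  · simp [sub_smul, sum_sub_distrib, mul_smul, ← smul_sum, hg]

end ConicalCaratheodory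

namespace PointedCone

section Hull

variable {E : Type*} [AddCommGroup E] [Module ℝ E]

theorem mem_hull_finset_iff {s : Finset E} {x : E} :
    x ∈ hull ℝ (s : Set E) ↔ ∃ c : s → ℝ, 0 ≤ c ∧ ∑ a, c a • (a : E) = x := by
  rw [Submodule.mem_span_finset']
  constructor
  · rintro ⟨c, rfl⟩
    exact ⟨fun a => c a, fun a => (c a).2, rfl⟩
  · rintro ⟨c, hc, rfl⟩
    exact ⟨fun a => ⟨c a, hc a⟩, rfl⟩

theorem hull_finset_subset_iUnion_erase [DecidableEq E] {s : Finset E}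
    (hs : ¬LinearIndependent ℝ ((↑) : s → E)) :
    (hull ℝ (s : Set E) : Set E) ⊆ ⋃ y ∈ s, hull ℝ (s.erase y : Set E) := by
  intro x hx
  obtain ⟨c, hc, rfl⟩ := mem_hull_finset_iff.1 hx
  obtain ⟨c', hc', ⟨y, hy⟩, hsum⟩ := exists_nonneg_coeff_eq_zero_of_not_linearIndependent hs hc
  rw [Set.mem_iUnion₂]
  refine ⟨y, y.2, hsum ▸ Submodule.sum_mem _ fun a _ => ?_⟩
  by_cases hay : a = y
  · simp [hay, hy]
  · exact smul_mem _ (hc' a) (subset_hull (mem_erase.2 ⟨fun h => hay (Subtype.ext h), a.2⟩))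

variable [TopologicalSpace E] [IsTopologicalAddGroup E] [ContinuousSMul ℝ E] [T2Space E]

theorem isClosed_hull_of_linearIndependent {s : Finset E}
    (hs : LinearIndependent ℝ ((↑) : s → E)) : IsClosed (hull ℝ (s : Set E) : Set E) := by
  have hemb : Topology.IsClosedEmbedding (Fintype.linearCombination ℝ ((↑) : s → E)) :=
    LinearMap.isClosedEmbedding_of_injective (LinearMap.ker_eq_bot.2
      (linearIndependent_iff_injective_fintypeLinearCombination.1 hs))
  have himage : (hull ℝ (s : Set E) : Set E) =
      Fintype.linearCombination ℝ ((↑) : s → E) '' Set.Ici 0 := by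
    ext x
    simp [mem_hull_finset_iff, Fintype.linearCombination_apply]
  rw [himage]
  exact hemb.isClosedMap _ isClosed_Ici

theorem isClosed_hull_finset (s : Finset E) : IsClosed (hull ℝ (s : Set E) : Set E) := by
  classical
  induction s using Finset.strongInduction with
  | _ s ih =>
  by_cases hs : LinearIndependent ℝ ((↑) : s → E)
  · exact isClosed_hull_of_linearIndependent hs
  · have heq : (hull ℝ (s : Set E) : Set E) = ⋃ y ∈ s, hull ℝ (s.erase y : Set E) :=
      (hull_finset_subset_iUnion_erase hs).antisymm <| Set.iUnion₂_subset fun y _ =>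
        Submodule.span_mono (coe_subset.2 (erase_subset y s))
    rw [heq]
    exact isClosed_biUnion_finset fun y hy => ih _ (erase_ssubset hy)

end Hull

section Lineal

variable {E : Type*} [AddCommGroup E] [Module ℝ E]

/-- `f` is nonnegative on `C` and vanishes exactly on its lineality space `C ∩ -C`. -/
def ExposesLineal (C : PointedCone ℝ E) (f : E →ₗ[ℝ] ℝ) : Prop :=
  ∀ x ∈ C, 0 ≤ f x ∧ (f x = 0 → -x ∈ C)

variable {C : PointedCone ℝ E} {f g : E →ₗ[ℝ] ℝ}

theorem ExposesLineal.neg_mem_iff (hf : C.ExposesLineal f) {x : E} (hx : x ∈ C) :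
    -x ∈ C ↔ f x = 0 := by
  refine ⟨fun hnx => ?_, (hf x hx).2⟩
  have := (hf (-x) hnx).1
  rw [map_neg] at this
  linarith [(hf x hx).1]

theorem ExposesLineal.add_smul (hf : C.ExposesLineal f) (hg : ∀ x ∈ C, 0 ≤ g x) {ε : ℝ}
    (hε : 0 < ε) : C.ExposesLineal (g + ε • f) := by
  intro x hx
  have hgx := hg x hx
  have hfx := (hf x hx).1
  refine ⟨by simp only [LinearMap.add_apply, LinearMap.smul_apply, smul_eq_mul]; positivity,
    fun h => (hf x hx).2 ?_⟩
  simp only [LinearMap.add_apply, LinearMap.smul_apply, smul_eq_mul] at h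
  nlinarith

theorem nonneg_of_mem_hull {s : Set E} (hs : ∀ y ∈ s, 0 ≤ f y) {x : E} (hx : x ∈ hull ℝ s) :
    0 ≤ f x :=
  (Submodule.span_le (p := (positive ℝ ℝ).comap f)).2 hs hx

theorem exposesLineal_hull {s : Set E} (hf : ∀ y ∈ s, 0 ≤ f y)
    (hs : ∀ y ∈ s, f y = 0 → -y ∈ hull ℝ s) : (hull ℝ s).ExposesLineal f := by
  intro x hx
  refine ⟨nonneg_of_mem_hull hf hx, ?_⟩
  induction hx using Submodule.span_induction with
  | mem y hy => exact hs y hy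
  | zero => simp
  | add x y hx hy ihx ihy =>
    intro h
    have := nonneg_of_mem_hull hf hx
    have := nonneg_of_mem_hull hf hy
    rw [map_add] at h
    rw [neg_add]
    exact add_mem (ihx (by linarith)) (ihy (by linarith))
  | smul a x hx ih =>
    intro h
    rw [← Nonneg.coe_smul, map_smul, smul_eq_mul, mul_eq_zero] at h
    rcases h with ha | h
    · simp [← Nonneg.coe_smul, ha]
    · rw [← smul_neg]
      exact Submodule.smul_mem _ a (ih h)

variable [TopologicalSpace E] [IsTopologicalAddGroup E] [ContinuousSMul ℝ E] [T2Space E]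
  [LocallyConvexSpace ℝ E]

theorem exists_dual_neg_of_notMem_hull_finset {s : Finset E} {x : E}
    (hx : x ∉ hull ℝ (s : Set E)) :
    ∃ f : E →ₗ[ℝ] ℝ, (∀ y ∈ hull ℝ (s : Set E), 0 ≤ f y) ∧ f x < 0 := by
  obtain ⟨f, hf, hfx⟩ := ProperCone.hyperplane_separation_point
    (C := ⟨hull ℝ (s : Set E), isClosed_hull_finset s⟩) hx
  exact ⟨f, hf, hfx⟩

theorem exists_exposesLineal_hull_of_finite {s : Set E} (hs : s.Finite) :
    ∃ f : E →ₗ[ℝ] ℝ, (hull ℝ s).ExposesLineal f := by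
  lift s to Finset E using hs
  have hsep : ∀ y : E, ∃ f : E →ₗ[ℝ] ℝ, (∀ x ∈ hull ℝ (s : Set E), 0 ≤ f x) ∧
      (-y ∉ hull ℝ (s : Set E) → 0 < f y) := by
    intro y
    by_cases hy : -y ∈ hull ℝ (s : Set E)
    · exact ⟨0, by simp, fun h => absurd hy h⟩
    · obtain ⟨f, hf, hfy⟩ := exists_dual_neg_of_notMem_hull_finset hy
      exact ⟨f, hf, fun _ => by simpa using hfy⟩
  choose F hF0 hF using hsep
  refine ⟨∑ y ∈ s, F y, exposesLineal_hull (fun y hy => ?_) fun y hy h => ?_⟩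
  · simpa using sum_nonneg fun z _ => hF0 z y (subset_hull hy)
  · by_contra hny
    have hle : F y y ≤ ∑ z ∈ s, F z y :=
      single_le_sum (fun z _ => hF0 z y (subset_hull hy)) hy
    rw [LinearMap.sum_apply] at h
    linarith [hF y hny]

end Lineal

end PointedCone

theorem exists_pos_forall_pos_sub_smul {ι : Type*} [Finite ι] {a : ι → ℝ} (ha : ∀ i, 0 < a i)
    (b : ι → ℝ) : ∃ ε : ℝ, 0 < ε ∧ ∀ i, 0 < (a - ε • b) i := by
  have : ∀ᶠ ε in nhds (0 : ℝ), ∀ i, 0 < (a - ε • b) i :=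
    Filter.eventually_all.2 fun i => (Continuous.tendsto (by fun_prop) 0).eventually
      (lt_mem_nhds (by simpa using ha i))
  exact this.exists_gt

namespace VASS

variable {d : ℕ} {Q : Type}

def castVec (v : Fin d → ℤ) : Fin d → ℝ := fun i => v i

theorem dotZ_eq_dotProduct (v : Fin d → ℤ) (w : Fin d → ℝ) : dotZ v w = castVec v ⬝ᵥ w := rfl

theorem dotR_eq_dotProduct (v w : Fin d → ℝ) : dotR v w = v ⬝ᵥ w := rfl

theorem coneZ_eq_hull (V : Set (Fin d → ℤ)) :
    coneZ V = (PointedCone.hull ℝ (castVec '' V) : Set (Fin d → ℝ)) := by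
  ext x
  constructor
  · rintro ⟨k, a, v, ha, hv, rfl⟩
    exact Submodule.sum_mem _ fun j _ =>
      PointedCone.smul_mem _ (ha j) (PointedCone.subset_hull ⟨v j, hv j, rfl⟩)
  · intro hx
    obtain ⟨k, a, y, rfl⟩ := Submodule.mem_span_set'.1 hx
    choose v hv hvy using fun j => (y j).2
    refine ⟨k, fun j => a j, v, fun j => (a j).2, hv, ?_⟩
    simp_rw [← Nonneg.coe_smul, ← hvy]
    rfl

theorem abs_eff_le {A : VASS d Q} {n : ℕ} {p : ℕ → Q} {u : ℕ → Fin d → ℤ} (h : A.IsPath n p u)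
    (i : Fin d) : |eff n u i| ≤ n := by
  calc |eff n u i| ≤ ∑ j ∈ Finset.range n, |u j i| := Finset.abs_sum_le_sum_abs _ _
    _ ≤ ∑ _j ∈ Finset.range n, 1 := Finset.sum_le_sum fun j hj => by
        have hu : u j i = -1 ∨ u j i = 0 ∨ u j i = 1 := A.upd_mem _ (h.2 j (mem_range.1 hj)) i
        rcases hu with e | e | e <;> simp [e]
    _ = n := by simp

theorem finite_Inc (A : VASS d Q) : A.Inc.Finite := by
  refine (Set.finite_Icc (-(Nat.card Q : Fin d → ℤ)) (Nat.card Q)).subset ?_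
  rintro _ ⟨n, p, u, ⟨hpath, -, hn⟩, rfl⟩
  have hbound i : |eff n u i| ≤ Nat.card Q := (abs_eff_le hpath i).trans (by exact_mod_cast hn)
  exact ⟨fun i => by simpa using (abs_le.1 (hbound i)).1,
    fun i => by simpa using (abs_le.1 (hbound i)).2⟩

end VASS

theorem stmt10_general {d : ℕ} {Q : Type} (A : VASS d Q)
    (hC : ∃ nv ∈ A.Normals, ∀ i, 0 < nv i) :
    ∃ nv : Fin d → ℝ, A.IsGoodNormal nv := by
  obtain ⟨n₀, ⟨hn₀ne, hn₀⟩, hn₀pos⟩ := hC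
  set C := hull ℝ (VASS.castVec '' A.Inc)
  obtain ⟨f, hf⟩ := exists_exposesLineal_hull_of_finite (A.finite_Inc.image VASS.castVec)
  set w := (dotProductEquiv ℝ (Fin d)).symm f
  obtain ⟨ε, hε, hpos⟩ := exists_pos_forall_pos_sub_smul hn₀pos w
  set nv := n₀ - ε • w
  have hn₀C : ∀ y ∈ C, 0 ≤ dotProductEquiv ℝ (Fin d) (-n₀) y := by
    refine fun y hy => nonneg_of_mem_hull ?_ hy
    rintro _ ⟨v, hv, rfl⟩
    simpa [VASS.dotZ_eq_dotProduct, dotProduct_comm] using hn₀ v hv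
  have hnvC : C.ExposesLineal (dotProductEquiv ℝ (Fin d) (-nv)) := by
    convert hf.add_smul hn₀C hε using 1
    simp [nv, w, sub_eq_add_neg, add_comm]
  refine ⟨nv, ⟨fun h => hn₀ne ?_, fun v hv => ?_⟩, hpos, fun x hx => ?_⟩
  · exact funext fun i => ((hpos i).ne' (congrFun h i)).elim
  · simpa [VASS.dotZ_eq_dotProduct, dotProduct_comm] using (hnvC _ (subset_hull ⟨v, hv, rfl⟩)).1
  · rw [VASS.coneZ_eq_hull] at hx ⊢
    rw [SetLike.mem_coe, hnvC.neg_mem_iff hx]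
    simp [VASS.dotR_eq_dotProduct, dotProduct_comm]

/-- a VASS satisfying condition (C) has a good normal. -/
theorem stmt10 {d : ℕ} {Q : Type} [Fintype Q] [Nonempty Q] (A : VASS d Q)
    (hC : ∃ nv ∈ A.Normals, ∀ i, 0 < nv i) :
    ∃ nv : Fin d → ℝ, A.IsGoodNormal nv :=
  stmt10_general A hC
end

section
/- Let A = (Q,T) be a d-dimensional VASS, let n ∈ Normals(A), and let A^n = (Q, T_n) where T_n = {t ∈ T : there is a short cycle γ of A containing t with eff(γ) · n = 0}. Then every cycle β of A^n lying within a single strongly connected component of A^n satisfies eff(β) · n = 0. -/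
/-!
Every transition `t` of `A^n` lies on a short cycle `γ` of `A` with `eff(γ) · n = 0`, so the
rest of `γ` is a walk of `A` from the target of `t` back to its source whose effect has dot
product `-(eff(t) · n)`. Chaining these return walks backwards along a cycle `β` of `A^n` gives a
cycle of `A` whose effect has dot product `-(eff(β) · n)`. Every cycle of `A` splits, at repeated
states, into short cycles, so the effect of every cycle has nonpositive dot product with the
normal `n`; applied to `β` and to the return cycle this forces `eff(β) · n = 0`.
-/

open scoped BigOperators ENNReal

theorem Finite.exists_apply_eq_apply_add {α : Type*} [Finite α] (f : ℕ → α) :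
    ∃ a l, 0 < l ∧ a + l ≤ Nat.card α ∧ f a = f (a + l) := by
  have hnot : ¬ Function.Injective (fun i : Fin (Nat.card α + 1) => f i) := fun hinj => by
    simpa using Nat.card_le_card_of_injective _ hinj
  obtain ⟨x, y, hxy, hne⟩ := Function.not_injective_iff.mp hnot
  rcases Fin.lt_or_lt_of_ne hne with h | h
  · exact ⟨x, y - x, by omega, by omega, by simpa [Nat.add_sub_cancel' h.le] using hxy⟩
  · exact ⟨y, x - y, by omega, by omega, by simpa [Nat.add_sub_cancel' h.le] using hxy.symm⟩

namespace VASS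

variable {d : ℕ} {Q : Type} {A : VASS d Q} {nv : Fin d → ℝ}

/-- Unlike `IsPath`, a walk may have length `0`. -/
def IsWalk (A : VASS d Q) (n : ℕ) (p : ℕ → Q) (u : ℕ → Fin d → ℤ) : Prop :=
  ∀ i < n, (p i, u i, p (i + 1)) ∈ A.T

def HasWalk (A : VASS d Q) (p q : Q) (v : Fin d → ℤ) : Prop :=
  ∃ n r u, A.IsWalk n r u ∧ r 0 = p ∧ r n = q ∧ eff n u = v

@[simp]
theorem eff_zero (u : ℕ → Fin d → ℤ) : eff 0 u = 0 := by
  ext i; simp [eff]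

theorem eff_succ (n : ℕ) (u : ℕ → Fin d → ℤ) : eff (n + 1) u = eff n u + u n := by
  ext i; simp [eff, Finset.sum_range_succ]

theorem eff_add (m n : ℕ) (u : ℕ → Fin d → ℤ) :
    eff (m + n) u = eff m u + eff n (fun k => u (m + k)) := by
  ext i; simp [eff, Finset.sum_range_add]

theorem eff_congr {n : ℕ} {u w : ℕ → Fin d → ℤ} (h : ∀ j < n, u j = w j) :
    eff n u = eff n w := by
  ext i
  exact Finset.sum_congr rfl fun j hj => by rw [h j (Finset.mem_range.mp hj)]

@[simp]
theorem dotZ_zero (nv : Fin d → ℝ) : dotZ 0 nv = 0 := by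
  simp [dotZ]

theorem dotZ_add (v w : Fin d → ℤ) (nv : Fin d → ℝ) :
    dotZ (v + w) nv = dotZ v nv + dotZ w nv := by
  simp [dotZ, add_mul, Finset.sum_add_distrib]

namespace IsWalk

variable {m n : ℕ} {p q : ℕ → Q} {u w : ℕ → Fin d → ℤ}

theorem mono (h : A.IsWalk n p u) (hmn : m ≤ n) : A.IsWalk m p u :=
  fun i hi => h i (by omega)

theorem drop (h : A.IsWalk (m + n) p u) :
    A.IsWalk n (fun k => p (m + k)) (fun k => u (m + k)) :=
  fun i hi => h (m + i) (by omega)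

theorem append (h₁ : A.IsWalk m p u) (h₂ : A.IsWalk n q w) (hpq : p m = q 0) :
    ∃ r v, A.IsWalk (m + n) r v ∧ r 0 = p 0 ∧ r (m + n) = q n ∧
      eff (m + n) v = eff m u + eff n w := by
  set r : ℕ → Q := fun j => if j ≤ m then p j else q (j - m)
  set v : ℕ → Fin d → ℤ := fun j => if j < m then u j else w (j - m)
  have hr : ∀ j, m ≤ j → r j = q (j - m) := fun j hj => by
    rcases hj.eq_or_lt with rfl | hlt
    · simp [r, hpq]
    · simp [r, hlt.not_ge]
  refine ⟨r, v, fun i hi => ?_, by simp [r], by simpa using hr (m + n) (by omega), ?_⟩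
  · by_cases him : i < m
    · simpa [r, v, him, him.le, Nat.succ_le_of_lt him] using h₁ i him
    · rw [hr i (by omega), hr (i + 1) (by omega), Nat.sub_add_comm (by omega)]
      simpa [v, him] using h₂ (i - m) (by omega)
  · rw [eff_add]
    congr 1
    · exact eff_congr fun j hj => by simp [v, hj]
    · exact eff_congr fun j _ => by simp [v]

theorem of_neutral (h : (A.neutral nv).IsWalk n p u) : A.IsWalk n p u :=
  fun i hi => (h i hi).1

theorem hasWalk (h : A.IsWalk n p u) : A.HasWalk (p 0) (p n) (eff n u) :=
  ⟨n, p, u, h, rfl, rfl, rfl⟩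

theorem dotZ_eff_nonpos [Finite Q] (hn : ∀ v ∈ A.Inc, dotZ v nv ≤ 0)
    (h : A.IsWalk n p u) (hcyc : p n = p 0) : dotZ (eff n u) nv ≤ 0 := by
  induction n using Nat.strong_induction_on generalizing p u with
  | _ n ih =>
  by_cases hshort : n ≤ Nat.card Q
  · rcases Nat.eq_zero_or_pos n with rfl | hpos
    · simp
    · exact hn _ ⟨n, p, u, ⟨⟨hpos, h⟩, hcyc, hshort⟩, rfl⟩
  obtain ⟨a, l, hl, hal, hrep⟩ := Finite.exists_apply_eq_apply_add p
  obtain ⟨m, rfl⟩ := Nat.exists_eq_add_of_le (show a + l ≤ n by omega)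
  have hinner : dotZ (eff l fun k => u (a + k)) nv ≤ 0 :=
    ih l (by omega) (h.mono (by omega)).drop (by simpa using hrep.symm)
  obtain ⟨r, v, hrv, hr0, hrn, hv⟩ := (h.mono (m := a) (by omega)).append h.drop
    (by simpa using hrep)
  have houter : dotZ (eff a u + eff m fun k => u (a + l + k)) nv ≤ 0 :=
    hv ▸ ih (a + m) (by omega) hrv (by rw [hrn, hr0, hcyc])
  rw [eff_add, eff_add, dotZ_add, dotZ_add]
  rw [dotZ_add] at houter
  linarith

end IsWalk

namespace HasWalk

theorem refl (p : Q) : A.HasWalk p p 0 :=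
  ⟨0, fun _ => p, 0, fun _ h => absurd h (Nat.not_lt_zero _), rfl, rfl, eff_zero _⟩

theorem trans {p q r : Q} {v w : Fin d → ℤ} (h₁ : A.HasWalk p q v) (h₂ : A.HasWalk q r w) :
    A.HasWalk p r (v + w) := by
  obtain ⟨m, p₁, u₁, hw₁, rfl, rfl, rfl⟩ := h₁
  obtain ⟨n, p₂, u₂, hw₂, h₀, rfl, rfl⟩ := h₂
  obtain ⟨s, v, hw, hs₀, hsn, hv⟩ := hw₁.append hw₂ h₀.symm
  exact ⟨m + n, s, v, hw, hs₀, hsn, hv⟩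

theorem dotZ_nonpos [Finite Q] {p : Q} {v : Fin d → ℤ}
    (hn : ∀ v ∈ A.Inc, dotZ v nv ≤ 0) (h : A.HasWalk p p v) : dotZ v nv ≤ 0 := by
  obtain ⟨n, r, u, hw, hr₀, hrn, rfl⟩ := h
  exact hw.dotZ_eff_nonpos hn (hrn.trans hr₀.symm)

end HasWalk

theorem exists_hasWalk_reverse_of_mem_neutral {p q : Q} {v : Fin d → ℤ}
    (ht : (p, v, q) ∈ (A.neutral nv).T) : ∃ w, A.HasWalk q p w ∧ dotZ w nv = -dotZ v nv := by
  obtain ⟨-, m, r, u, ⟨⟨-, hw⟩, hcyc, -⟩, hzero, j, hj, hjt⟩ := ht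
  simp only [Prod.mk.injEq] at hjt
  obtain ⟨rfl, rfl, rfl⟩ := hjt
  obtain ⟨k, rfl⟩ := Nat.exists_eq_add_of_le (show j + 1 ≤ m by omega)
  replace hw : A.IsWalk (j + 1 + k) r u := hw
  have hsuffix := hw.drop.hasWalk
  rw [add_zero, hcyc] at hsuffix
  refine ⟨_, hsuffix.trans (hw.mono (m := j) (by omega)).hasWalk, ?_⟩
  rw [eff_add, eff_succ, dotZ_add, dotZ_add] at hzero
  rw [dotZ_add]
  linarith

theorem IsWalk.exists_hasWalk_reverse_of_neutral {n : ℕ} {p : ℕ → Q}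
    {u : ℕ → Fin d → ℤ} (h : (A.neutral nv).IsWalk n p u) :
    ∃ w, A.HasWalk (p n) (p 0) w ∧ dotZ w nv = -dotZ (eff n u) nv := by
  induction n with
  | zero => exact ⟨0, HasWalk.refl _, by simp⟩
  | succ n ih =>
    obtain ⟨w, hw, hdot⟩ := ih (h.mono n.le_succ)
    obtain ⟨w', hw', hdot'⟩ := exists_hasWalk_reverse_of_mem_neutral (h n n.lt_succ_self)
    refine ⟨w' + w, hw'.trans hw, ?_⟩
    rw [eff_succ, dotZ_add, dotZ_add, hdot, hdot']
    ring

end VASS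

theorem stmt14_general {d : ℕ} {Q : Type} [Fintype Q] (A : VASS d Q)
    (nv : Fin d → ℝ) (hn : nv ∈ A.Normals)
    (n : ℕ) (p : ℕ → Q) (u : ℕ → Fin d → ℤ)
    (hpath : (A.neutral nv).IsPath n p u) (hcyc : p n = p 0) :
    VASS.dotZ (VASS.eff n u) nv = 0 := by
  have hwalk : (A.neutral nv).IsWalk n p u := hpath.2
  have hforward := hwalk.of_neutral.dotZ_eff_nonpos hn.2 hcyc
  obtain ⟨w, hback, hw⟩ := hwalk.exists_hasWalk_reverse_of_neutral
  have hbackward := (hcyc ▸ hback).dotZ_nonpos hn.2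
  linarith

/-- every cycle of `A^nv` lying within a single SCC of `A^nv`
satisfies `eff(β) · nv = 0`. -/
theorem stmt14 {d : ℕ} {Q : Type} [Fintype Q] [Nonempty Q] (A : VASS d Q)
    (nv : Fin d → ℝ) (hn : nv ∈ A.Normals)
    (n : ℕ) (p : ℕ → Q) (u : ℕ → Fin d → ℤ)
    (hpath : (A.neutral nv).IsPath n p u) (hcyc : p n = p 0)
    (R : Set Q) (hR : (A.neutral nv).IsSCC R) (hin : ∀ i ≤ n, p i ∈ R) :
    VASS.dotZ (VASS.eff n u) nv = 0 :=
  stmt14_general A nv hn n p u hpath hcyc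
end

section
/- Consider the 3-dimensional VASS A = (Q,T) with Q = {q_1,q_2,q_3,q_4} and T = {(q_1,(1,0,0),q_2), (q_2,(1,−1,0),q_1), (q_2,(0,0,0),q_4), (q_4,(0,1,0),q_3), (q_3,(−1,1,0),q_4), (q_3,(0,0,−1),q_1)}. Then A is strongly connected, satisfies condition (D), and its termination complexity satisfies 𝓛(n) ∈ Ω(2ⁿ), i.e., there is a ∈ ℝ⁺ with 𝓛(n) ≥ a·2ⁿ for all sufficiently large n (in particular, for each sufficiently large n there is a zero-avoiding computation from q_1(n,n,n) of length at least 4ⁿ − n). -/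
open scoped BigOperators ENNReal

/-- The concrete 3-dimensional VASS of Fig. 5 (states: `q_i` is `i-1 : Fin 4`). -/
def A17 : VASS 3 (Fin 4) where
  T := {(0, ![1, 0, 0], 1), (1, ![1, -1, 0], 0), (1, ![0, 0, 0], 3),
        (3, ![0, 1, 0], 2), (2, ![-1, 1, 0], 3), (2, ![0, 0, -1], 0)}
  upd_mem := by
    intro t ht i
    simp only [Set.mem_insert_iff, Set.mem_singleton_iff] at ht
    rcases ht with rfl | rfl | rfl | rfl | rfl | rfl <;> fin_cases i <;> simp

/-!
The 2-cycles `q₁ ⇄ q₂` and `q₄ ⇄ q₃` have effects `(2,-1,0)` and `(-1,2,0)`, so a normal `n`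
satisfies `2 n₁ ≤ n₂` and `2 n₂ ≤ n₁`, which no positive `n` does; `(0,0,1)` is a normal because
no transition increases the third counter.

For the lower bound, one round `q₁ → q₁` spends one unit of the third counter: the cycle
`q₁ ⇄ q₂` turns each unit of the second counter into two units of the first, and the cycle
`q₄ ⇄ q₃` turns them back, doubling again. So `q₁(1, y, z)` reaches `q₁(1, ≈ 4y, z - 1)`, and
iterating gives a run of length about `2y · 4^z`.
-/

namespace VASS

variable {d : ℕ} {Q : Type} {A : VASS d Q}

theorem Reaches.single {p q : Q} {u : Fin d → ℤ} (h : (p, u, q) ∈ A.T) : A.Reaches p q :=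
  ⟨1, fun i => if i = 0 then p else q, fun _ => u, ⟨le_rfl, fun i hi => by
    obtain rfl : i = 0 := by omega
    simpa using h⟩, rfl, rfl⟩

theorem Reaches.trans {p q r : Q} (h₁ : A.Reaches p q) (h₂ : A.Reaches q r) :
    A.Reaches p r := by
  obtain ⟨n, pp, u, ⟨hn, hpath⟩, rfl, rfl⟩ := h₁
  obtain ⟨m, pp', u', ⟨hm, hpath'⟩, h0', rfl⟩ := h₂
  refine ⟨n + m, fun i => if i < n then pp i else pp' (i - n),
    fun i => if i < n then u i else u' (i - n), ⟨by omega, fun i hi => ?_⟩,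
    by simp [show 0 < n by omega], by simp⟩
  by_cases hi' : i + 1 < n
  · simpa [hi', show i < n by omega] using hpath i (by omega)
  by_cases hin : i < n
  · obtain rfl : i + 1 = n := by omega
    simpa [hin, h0'] using hpath i hin
  · simpa [hin, hi', show i + 1 - n = i - n + 1 by omega] using hpath' (i - n) (by omega)

theorem add_mem_Inc_of_cycle_two {p q : Q} {u w : Fin d → ℤ} (hu : (p, u, q) ∈ A.T)
    (hw : (q, w, p) ∈ A.T) (hQ : 2 ≤ Nat.card Q) : u + w ∈ A.Inc := by
  refine ⟨2, fun i => if i = 1 then q else p, fun i => if i = 0 then u else w,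
    ⟨⟨one_le_two, fun i hi => ?_⟩, rfl, hQ⟩, ?_⟩
  · interval_cases i <;> simpa
  · ext i
    simp [eff, Finset.sum_range_succ]

theorem dotZ_eff (n : ℕ) (u : ℕ → Fin d → ℤ) (w : Fin d → ℝ) :
    dotZ (eff n u) w = ∑ j ∈ Finset.range n, dotZ (u j) w := by
  simp only [dotZ, eff, Int.cast_sum, Finset.sum_mul]
  exact Finset.sum_comm

theorem dotZ_nonpos_of_mem_Inc {w : Fin d → ℝ} (hT : ∀ t ∈ A.T, dotZ t.2.1 w ≤ 0)
    {v : Fin d → ℤ} (hv : v ∈ A.Inc) : dotZ v w ≤ 0 := by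
  obtain ⟨n, p, u, ⟨⟨-, hpath⟩, -, -⟩, rfl⟩ := hv
  rw [dotZ_eff]
  exact Finset.sum_nonpos fun j hj => hT _ (hpath j (Finset.mem_range.mp hj))

def HasRun (A : VASS d Q) (p : Q) (v : Fin d → ℕ) (n : ℕ) : Prop :=
  ∃ q z, q 0 = p ∧ z 0 = v ∧ A.IsZeroAvoiding n q z

theorem hasRun_zero (p : Q) {v : Fin d → ℕ} (hv : ∀ j, 0 < v j) : A.HasRun p v 0 :=
  ⟨fun _ => p, fun _ => v, rfl, rfl, fun _ _ => hv, fun _ h => absurd h (Nat.not_lt_zero _)⟩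

theorem HasRun.cons {p p' : Q} {v v' : Fin d → ℕ} {n : ℕ}
    (hT : (p, fun j => (v' j : ℤ) - v j, p') ∈ A.T) (hv : ∀ j, 0 < v j)
    (h : A.HasRun p' v' n) : A.HasRun p v (n + 1) := by
  obtain ⟨q, z, rfl, rfl, hpos, hstep⟩ := h
  refine ⟨Nat.rec p fun i _ => q i, Nat.rec v fun i _ => z i, rfl, rfl, ?_, ?_⟩
  · rintro (_ | i) hi
    exacts [hv, hpos i (by omega)]
  · rintro (_ | i) hi
    exacts [hT, hstep i (by omega)]

theorem HasRun.cons₃ {A : VASS 3 Q} {p p' : Q} {x y z x' y' z' n : ℕ}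
    (hT : (p, ![(x' : ℤ) - x, (y' : ℤ) - y, (z' : ℤ) - z], p') ∈ A.T)
    (hx : 0 < x) (hy : 0 < y) (hz : 0 < z) (h : A.HasRun p' ![x', y', z'] n) :
    A.HasRun p ![x, y, z] (n + 1) := by
  refine h.cons ?_ ?_
  · convert hT using 3
    ext j; fin_cases j <;> rfl
  · intro j; fin_cases j <;> assumption

theorem HasRun.le_L {p : Q} {v : Fin d → ℕ} {n : ℕ} (h : A.HasRun p v n) :
    (n : ℕ∞) ≤ A.L (Finset.univ.sup v) :=
  le_iSup_of_le p <| le_iSup_of_le v <| le_iSup_of_le rfl <| le_iSup₂_of_le n h le_rfl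

end VASS

namespace A17

open VASS

theorem reaches_of_ne : ∀ p q : Fin 4, p ≠ q → A17.Reaches p q := by
  have r01 : A17.Reaches 0 1 := .single (u := ![1, 0, 0]) (by simp [A17])
  have r13 : A17.Reaches 1 3 := .single (u := ![0, 0, 0]) (by simp [A17])
  have r32 : A17.Reaches 3 2 := .single (u := ![0, 1, 0]) (by simp [A17])
  have r20 : A17.Reaches 2 0 := .single (u := ![0, 0, -1]) (by simp [A17])
  have to0 : ∀ p, A17.Reaches p 0 := by
    intro p
    fin_cases p
    exacts [r01.trans (r13.trans (r32.trans r20)), r13.trans (r32.trans r20), r20, r32.trans r20]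
  have from0 : ∀ q, A17.Reaches 0 q := by
    intro q
    fin_cases q
    exacts [(r01.trans r13).trans (r32.trans r20), r01, (r01.trans r13).trans r32, r01.trans r13]
  exact fun p q _ => (to0 p).trans (from0 q)

theorem not_exists_pos_normal : ¬ ∃ nv ∈ A17.Normals, ∀ i, 0 < nv i := by
  rintro ⟨nv, ⟨-, hInc⟩, hpos⟩
  have hcard : 2 ≤ Nat.card (Fin 4) := by simp
  have h₁ : 2 * nv 0 ≤ nv 1 := by
    simpa [dotZ, Fin.sum_univ_three, one_add_one_eq_two] using hInc _ (add_mem_Inc_of_cycle_two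
      (A := A17) (p := 0) (q := 1) (u := ![1, 0, 0]) (w := ![1, -1, 0]) (by simp [A17]) (by simp [A17]) hcard)
  have h₂ : 2 * nv 1 ≤ nv 0 := by
    simpa [dotZ, Fin.sum_univ_three, one_add_one_eq_two] using hInc _ (add_mem_Inc_of_cycle_two
      (A := A17) (p := 3) (q := 2) (u := ![0, 1, 0]) (w := ![-1, 1, 0]) (by simp [A17]) (by simp [A17]) hcard)
  linarith [hpos 0, hpos 1]

theorem exists_nonneg_normal : ∃ nv ∈ A17.Normals, ∀ i, 0 ≤ nv i := by
  refine ⟨![0, 0, 1], ⟨fun h => by simpa using congrFun h 2, fun v hv => ?_⟩, ?_⟩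
  · refine dotZ_nonpos_of_mem_Inc (fun t ht => ?_) hv
    simp only [A17, Set.mem_insert_iff, Set.mem_singleton_iff] at ht
    rcases ht with rfl | rfl | rfl | rfl | rfl | rfl <;> simp [dotZ, Fin.sum_univ_three]
  · intro i; fin_cases i <;> simp

variable {x y z n : ℕ}

theorem hasRun_transfer_second_to_first (k : ℕ) (hx : 0 < x) (hz : 0 < z)
    (h : A17.HasRun 0 ![x + 2 * k, y, z] n) : A17.HasRun 0 ![x, y + k, z] (n + 2 * k) := by
  induction k generalizing x n with
  | zero => simpa using h
  | succ k ih =>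
    rw [show x + 2 * (k + 1) = x + 2 + 2 * k by ring] at h
    have h₁ : A17.HasRun 1 ![x + 1, y + k + 1, z] (n + 2 * k + 1) :=
      (ih (by omega) h).cons₃ (by simp [A17]) (by omega) (by omega) hz
    simpa [← add_assoc, mul_add] using h₁.cons₃ (p := 0) (by simp [A17]) hx (by omega) hz

theorem hasRun_transfer_first_to_second (k : ℕ) (hy : 0 < y) (hz : 0 < z)
    (h : A17.HasRun 3 ![x, y + 2 * k, z] n) : A17.HasRun 3 ![x + k, y, z] (n + 2 * k) := by
  induction k generalizing y n with
  | zero => simpa using h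
  | succ k ih =>
    rw [show y + 2 * (k + 1) = y + 2 + 2 * k by ring] at h
    have h₁ : A17.HasRun 2 ![x + k + 1, y + 1, z] (n + 2 * k + 1) :=
      (ih (by omega) h).cons₃ (by simp [A17]) (by omega) (by omega) hz
    simpa [← add_assoc, mul_add] using h₁.cons₃ (p := 3) (by simp [A17]) (by omega) hy hz

theorem hasRun_round (hz : 0 < z) (h : A17.HasRun 0 ![1, 2 * x + 4 * y + 4, z] n) :
    A17.HasRun 0 ![x + 1, y + 1, z + 1] (n + (2 * x + 6 * y + 6)) := by
  have h₁ : A17.HasRun 2 ![1, 2 * x + 4 * y + 4, z + 1] (n + 1) :=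
    h.cons₃ (by simp [A17]) one_pos (by omega) (by omega)
  have h₂ : A17.HasRun 3 ![1, 1 + 2 * (x + 2 * y + 1), z + 1] (n + 2) :=
    h₁.cons₃ (by simp [A17]; ring_nf) one_pos (by omega) (by omega)
  have h₃ := hasRun_transfer_first_to_second _ one_pos (by omega) h₂
  have h₄ : A17.HasRun 1 ![x + 2 * y + 2, 1, z + 1] (n + 2 + 2 * (x + 2 * y + 1) + 1) :=
    h₃.cons₃ (by simp [A17]; ring_nf) (by omega) one_pos (by omega)
  have h₅ : A17.HasRun 0 ![x + 1 + 2 * y, 1, z + 1] (n + 2 + 2 * (x + 2 * y + 1) + 1 + 1) :=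
    h₄.cons₃ (by simp [A17]; ring_nf) (by omega) one_pos (by omega)
  convert hasRun_transfer_second_to_first y (by omega) (by omega) h₅ using 1
  · rw [add_comm 1 y]
  · ring

-- `2 (y + 1) (4 ^ z - 1)` solves `f y 0 = 0`, `f y (z + 1) = 6 (y + 1) + f (4 y + 3) z`.
theorem hasRun_exponential (y z : ℕ) :
    A17.HasRun 0 ![1, y + 1, z + 1] (2 * (y + 1) * (4 ^ z - 1)) := by
  induction z generalizing y with
  | zero => exact hasRun_zero 0 (by simp [Fin.forall_fin_succ])
  | succ z ih =>
    have h := hasRun_round (x := 0) (y := y) (z := z + 1) (by omega)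
      (by simpa [mul_add] using ih (4 * y + 3))
    obtain ⟨c, hc⟩ := Nat.exists_eq_add_of_le' (Nat.one_le_pow z 4 (by norm_num))
    convert h using 1
    rw [pow_succ, hc, show (c + 1) * 4 - 1 = 4 * c + 3 by omega]
    simp only [add_tsub_cancel_right]
    ring

theorem exists_hasRun_ge_four_pow (hn : 3 ≤ n) :
    ∃ len, A17.HasRun 0 (fun _ => n) len ∧ 4 ^ n ≤ len := by
  obtain ⟨m, rfl⟩ := Nat.exists_eq_add_of_le' hn
  have h := hasRun_round (x := m + 2) (y := m + 2) (z := m + 2) (by omega)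
    (by convert hasRun_exponential (6 * m + 15) (m + 1) using 2; simp; ring)
  refine ⟨_, by convert h using 1; ext j; fin_cases j <;> rfl, ?_⟩
  obtain ⟨c, hc⟩ := Nat.exists_eq_add_of_le' (Nat.le_self_pow (Nat.succ_ne_zero m) 4)
  rw [show m + 3 = m + 1 + 2 by ring, pow_add, hc, show c + 4 - 1 = c + 3 by omega]
  nlinarith

end A17

/-- the VASS `A17` is strongly connected, satisfies condition (D),
and has termination complexity `Ω(2^n)`; in particular, for every sufficiently
large `n` there is a zero-avoiding computation from `q₁(n,n,n)` of length at
least `4^n - n`. -/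
theorem stmt17 :
    (∀ p q : Fin 4, p ≠ q → A17.Reaches p q) ∧
    (¬ ∃ nv ∈ A17.Normals, ∀ i, 0 < nv i) ∧
    (∃ nv ∈ A17.Normals, ∀ i, 0 ≤ nv i) ∧
    (∃ a : ℝ, 0 < a ∧ ∃ N : ℕ, ∀ n : ℕ, N ≤ n →
      ENNReal.ofReal (a * 2 ^ n) ≤ (A17.L n : ℝ≥0∞)) ∧
    (∃ N : ℕ, ∀ n : ℕ, N ≤ n →
      ∃ (len : ℕ) (q : ℕ → Fin 4) (z : ℕ → Fin 3 → ℕ),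
        q 0 = 0 ∧ z 0 = (fun _ => n) ∧ A17.IsZeroAvoiding len q z ∧
        4 ^ n - n ≤ len) := by
  refine ⟨A17.reaches_of_ne, A17.not_exists_pos_normal, A17.exists_nonneg_normal,
    ⟨1, one_pos, 3, fun n hn => ?_⟩, ⟨3, fun n hn => ?_⟩⟩
  · obtain ⟨len, hrun, hlen⟩ := A17.exists_hasRun_ge_four_pow hn
    have hL : (len : ℕ∞) ≤ A17.L n := by
      simpa [Finset.sup_const Finset.univ_nonempty] using hrun.le_L
    have h2 : 2 ^ n ≤ len := (Nat.pow_le_pow_left (by norm_num) n).trans hlen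
    calc ENNReal.ofReal (1 * 2 ^ n) = ((2 ^ n : ℕ) : ℝ≥0∞) := by simp
      _ ≤ ((len : ℕ∞) : ℝ≥0∞) := by rw [ENat.toENNReal_coe]; exact_mod_cast h2
      _ ≤ A17.L n := ENat.toENNReal_le.mpr hL
  · obtain ⟨len, ⟨q, z, hq, hz, hrun⟩, hlen⟩ := A17.exists_hasRun_ge_four_pow hn
    exact ⟨len, q, z, hq, hz, hrun, (Nat.sub_le _ _).trans hlen⟩
end
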